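/- Every graph in the class C1 ∪ C2 ∪ C3 can be reduced to a single vertex by repeatedly deleting a one-vertex extension of the current graph. -/

import Mathlib

/-!
The last vertex `v_n` (`n ≥ 3`) of a graph in `C_j` is anti-pendant when `n` is odd (it sees
everything but `v_{n-1}`) and pendant at `v_{n-1}` when `n` is even, and deleting it leaves the
graph of `C_j` built on `v_1, …, v_{n-1}`. This reduces the theorem to the three five-vertex
graphs with `n = 2`, for which an explicit order of deletions is checked by evaluation.
-/

open SimpleGraph

/-- The elementary adjacency condition (0-indexed): the earlier neighbourhood of `v_k` is
`{v_j : j + 1 < k}` when `k` is even (i.e. the 1-indexed position `k+1` is odd) and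
`{v_{k-1}}` when `k` is odd. -/
def elemCond (k j : ℕ) : Prop :=
  j < k ∧ (if Even k then j + 1 < k else j + 1 = k)

/-- The defining relation of the graph of class `C_{c+1}` (`c : Fin 3`) built on an
elementary graph with vertices `Sum.inl k` (`k : Fin n`, 0-indexed, so `v_i = inl (i-1)`)
together with the three added vertices `p = inr 0`, `q = inr 1`, `r = inr 2`. -/
def CRel (c : Fin 3) (n : ℕ) : (Fin n ⊕ Fin 3) → (Fin n ⊕ Fin 3) → Prop
  | Sum.inl k, Sum.inl j => elemCond (k : ℕ) (j : ℕ)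
  | Sum.inr t, Sum.inl k =>
      -- for all three classes: p, q, r adjacent to v_i for every odd i > 1
      (Even (k : ℕ) ∧ 2 ≤ (k : ℕ)) ∨
      -- C1: {v1, q} and {v2, p}
      (c = 0 ∧ ((t = 1 ∧ (k : ℕ) = 0) ∨ (t = 0 ∧ (k : ℕ) = 1))) ∨
      -- C2: {v1, q} and {v2, r}
      (c = 1 ∧ ((t = 1 ∧ (k : ℕ) = 0) ∨ (t = 2 ∧ (k : ℕ) = 1))) ∨
      -- C3: {v1, r}
      (c = 2 ∧ (t = 2 ∧ (k : ℕ) = 0))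
  | Sum.inl _, Sum.inr _ => False
  | Sum.inr s, Sum.inr t =>
      -- C1: {p, r};  C2: {p, q}, {p, r}, {q, r};  C3: {p, q}, {p, r}
      (c = 0 ∧ (s = 0 ∧ t = 2)) ∨
      (c = 1 ∧ s ≠ t) ∨
      (c = 2 ∧ ((s = 0 ∧ t = 1) ∨ (s = 0 ∧ t = 2)))

/-- The graph of class `C_{c+1}` obtained from the elementary graph on `n` vertices by
adding the three vertices `p, q, r` and the prescribed edges. -/
def CGraph (c : Fin 3) (n : ℕ) : SimpleGraph (Fin n ⊕ Fin 3) :=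
  SimpleGraph.fromRel (CRel c n)

/-- A one-vertex extension: a vertex that is universal, isolated, anti-pendant, pendant,
a true twin, or a false twin. -/
def OneVertexExtension {V : Type*} (G : SimpleGraph V) (v : V) : Prop :=
  (insert v (G.neighborSet v) = Set.univ) ∨
  (G.neighborSet v = ∅) ∨
  (∃ u, u ≠ v ∧ insert v (G.neighborSet v) = {u}ᶜ) ∨
  (∃ u, u ≠ v ∧ G.neighborSet v = {u}) ∨
  (∃ u, u ≠ v ∧ insert v (G.neighborSet v) = insert u (G.neighborSet u)) ∨
  (∃ u, u ≠ v ∧ G.neighborSet v = G.neighborSet u)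

/-- One pruning step: delete from the current induced subgraph `G[S]` a vertex that is a
one-vertex extension of `G[S]`. -/
def OVEStep {V : Type*} (G : SimpleGraph V) (S T : Set V) : Prop :=
  ∃ (x : V) (h : x ∈ S), OneVertexExtension (G.induce S) ⟨x, h⟩ ∧ T = S \ {x}

open Relation

section OneVertexExtensions

variable {V W : Type*} {G : SimpleGraph V} {H : SimpleGraph W}

namespace OneVertexExtension

theorem of_pendant {v u : V} (h : ∀ y, G.Adj v y ↔ y = u) : OneVertexExtension G v :=
  .inr <| .inr <| .inr <| .inl ⟨u, fun huv => G.irrefl ((h v).2 huv.symm), Set.ext h⟩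

theorem of_antipendant {v u : V} (huv : u ≠ v) (h : ∀ y, y ≠ v → (G.Adj v y ↔ y ≠ u)) :
    OneVertexExtension G v := by
  refine .inr <| .inr <| .inl ⟨u, huv, Set.ext fun y => ?_⟩
  by_cases hy : y = v
  · simp [hy, huv.symm]
  · simp [hy, h y hy]

theorem map (f : G ≃g H) {v : V} (h : OneVertexExtension G v) : OneVertexExtension H (f v) := by
  have hN (w : V) : H.neighborSet (f w) = f '' G.neighborSet w := by
    ext y
    obtain ⟨y, rfl⟩ := f.surjective y
    simp [f.map_adj_iff]
  have hN' (w : V) : insert (f w) (H.neighborSet (f w)) = f '' insert w (G.neighborSet w) := by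
    rw [Set.image_insert_eq, hN]
  have hne {u : V} (hu : u ≠ v) : f u ≠ f v := f.injective.ne hu
  rcases h with h | h | ⟨u, hu, h⟩ | ⟨u, hu, h⟩ | ⟨u, hu, h⟩ | ⟨u, hu, h⟩
  · exact .inl (by rw [hN', h, Set.image_univ_of_surjective f.surjective])
  · exact .inr <| .inl (by rw [hN, h, Set.image_empty])
  · refine .inr <| .inr <| .inl ⟨f u, hne hu, ?_⟩
    rw [hN', h, Set.image_compl_eq f.bijective, Set.image_singleton]
  · exact .inr <| .inr <| .inr <| .inl ⟨f u, hne hu, by rw [hN, h, Set.image_singleton]⟩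
  · exact .inr <| .inr <| .inr <| .inr <| .inl ⟨f u, hne hu, by rw [hN', hN', h]⟩
  · exact .inr <| .inr <| .inr <| .inr <| .inr ⟨f u, hne hu, by rw [hN, hN, h]⟩

end OneVertexExtension

theorem OVEStep.univ_compl {v : V} (h : OneVertexExtension G v) : OVEStep G Set.univ {v}ᶜ :=
  ⟨v, trivial, h.map (induceUnivIso G).symm, Set.compl_eq_univ_sdiff _⟩

theorem OVEStep.image (f : G ↪g H) {S T : Set V} (h : OVEStep G S T) :
    OVEStep H (f '' S) (f '' T) := by
  obtain ⟨x, hx, hove, rfl⟩ := h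
  let e : G.induce S ≃g H.induce (f '' S) :=
    { Equiv.Set.image f S f.injective with map_rel_iff' := by simp }
  exact ⟨f x, Set.mem_image_of_mem f hx, hove.map e,
    by rw [Set.image_sdiff f.injective, Set.image_singleton]⟩

theorem reflTransGen_OVEStep_image (f : G ↪g H) {S T : Set V}
    (h : ReflTransGen (OVEStep G) S T) : ReflTransGen (OVEStep H) (f '' S) (f '' T) :=
  h.lift (f '' ·) fun _ _ => OVEStep.image f

def TotallyDecomposable (G : SimpleGraph V) : Prop :=
  ∃ x, ReflTransGen (OVEStep G) Set.univ {x}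

namespace TotallyDecomposable

theorem of_iso (e : G ≃g H) (hH : TotallyDecomposable H) : TotallyDecomposable G := by
  obtain ⟨x, hx⟩ := hH
  refine ⟨e.symm x, ?_⟩
  simpa [Set.image_univ_of_surjective e.symm.surjective] using
    reflTransGen_OVEStep_image e.symm.toEmbedding hx

theorem of_oneVertexExtension {v : V} (hv : OneVertexExtension G v) (f : H ↪g G)
    (hf : Set.range f = {v}ᶜ) (hH : TotallyDecomposable H) : TotallyDecomposable G := by
  obtain ⟨x, hx⟩ := hH
  refine ⟨f x, .head (OVEStep.univ_compl hv) ?_⟩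
  simpa [hf] using reflTransGen_OVEStep_image f hx

end TotallyDecomposable

section Pruning

variable [DecidableEq V] (G)

def IsPendantIn (s : Finset V) (x : V) : Prop :=
  ∃ u ∈ s, ∀ y ∈ s, G.Adj x y ↔ y = u

def IsAntipendantIn (s : Finset V) (x : V) : Prop :=
  ∃ u ∈ s, u ≠ x ∧ ∀ y ∈ s, y ≠ x → (G.Adj x y ↔ y ≠ u)

def IsPruningSeq : Finset V → List V → Prop
  | s, [] => s.card = 1
  | s, x :: l =>
    x ∈ s ∧ (IsPendantIn G s x ∨ IsAntipendantIn G s x) ∧ IsPruningSeq (s.erase x) l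

instance IsPruningSeq.decidable [DecidableRel G.Adj] :
    ∀ s l, Decidable (IsPruningSeq G s l)
  | _, [] => inferInstanceAs (Decidable (_ = 1))
  | s, x :: l =>
    have := IsPruningSeq.decidable (s.erase x) l
    inferInstanceAs (Decidable (x ∈ s ∧ ((∃ u ∈ s, _) ∨ (∃ u ∈ s, _)) ∧ _))

variable {G}

theorem OVEStep.erase_of_isPendantIn {s : Finset V} {x : V} (hx : x ∈ s)
    (h : IsPendantIn G s x ∨ IsAntipendantIn G s x) : OVEStep G s (s.erase x) := by
  refine ⟨x, hx, ?_, by rw [Finset.coe_erase]⟩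
  rcases h with ⟨u, hu, h⟩ | ⟨u, hu, hux, h⟩
  · exact .of_pendant (u := ⟨u, hu⟩) fun y => by simpa [Subtype.ext_iff] using h y y.2
  · refine .of_antipendant (u := ⟨u, hu⟩) (by simpa [Subtype.ext_iff]) fun y hy => ?_
    simpa [Subtype.ext_iff] using h y y.2 (by simpa [Subtype.ext_iff] using hy)

theorem IsPruningSeq.reflTransGen :
    ∀ {s : Finset V} {l : List V}, IsPruningSeq G s l → ∃ x, ReflTransGen (OVEStep G) s {x}
  | s, [], h => by
    obtain ⟨x, rfl⟩ := Finset.card_eq_one.1 h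
    exact ⟨x, by rw [Finset.coe_singleton]⟩
  | s, x :: l, ⟨hx, hxs, hl⟩ => by
    obtain ⟨z, hz⟩ := hl.reflTransGen
    exact ⟨z, .head (OVEStep.erase_of_isPendantIn hx hxs) hz⟩

theorem TotallyDecomposable.of_isPruningSeq [Fintype V] {l : List V}
    (h : IsPruningSeq G Finset.univ l) : TotallyDecomposable G := by
  simpa [TotallyDecomposable] using h.reflTransGen

end Pruning

end OneVertexExtensions

instance : DecidableRel elemCond :=
  fun _ _ => inferInstanceAs (Decidable (_ ∧ ite _ _ _))

instance (c : Fin 3) (n : ℕ) : DecidableRel (CRel c n)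
  | .inl _, .inl _ => inferInstanceAs (Decidable (elemCond _ _))
  | .inr _, .inl _ => inferInstanceAs (Decidable (_ ∨ _))
  | .inl _, .inr _ => inferInstanceAs (Decidable False)
  | .inr _, .inr _ => inferInstanceAs (Decidable (_ ∨ _))

instance (c : Fin 3) (n : ℕ) : DecidableRel (CGraph c n).Adj :=
  fun _ _ => inferInstanceAs (Decidable (_ ∧ _))

namespace CGraph

variable (c : Fin 3)

def castSuccEmb (n : ℕ) : CGraph c n ↪g CGraph c (n + 1) where
  toFun := Sum.map Fin.castSucc id
  inj' := Sum.map_injective.2 ⟨Fin.castSucc_injective n, Function.injective_id⟩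
  map_rel_iff' := by
    rintro (a | a) (b | b) <;> simp [CGraph, CRel]

theorem range_castSuccEmb (n : ℕ) : Set.range (castSuccEmb c n) = {.inl (Fin.last n)}ᶜ := by
  ext (j | t)
  · simp [castSuccEmb, Fin.exists_castSucc_eq]
  · simp [castSuccEmb]

variable {c} {m : ℕ}

theorem adj_inl_last_inl (j : Fin (m + 1)) :
    (CGraph c (m + 1)).Adj (.inl (Fin.last m)) (.inl j) ↔ elemCond m j := by
  have := j.isLt
  simp only [CGraph, fromRel_adj, CRel, elemCond, Fin.val_last, ne_eq, Sum.inl.injEq, Fin.ext_iff]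
  split_ifs <;> omega

theorem adj_inl_last_inr (hm : 2 ≤ m) (t : Fin 3) :
    (CGraph c (m + 1)).Adj (.inl (Fin.last m)) (.inr t) ↔ Even m := by
  simp [CGraph, CRel, hm, show m ≠ 0 by omega, show m ≠ 1 by omega]

variable (c)

theorem oneVertexExtension_last (hm : 2 ≤ m) :
    OneVertexExtension (CGraph c (m + 1)) (.inl (Fin.last m)) := by
  let u : Fin (m + 1) ⊕ Fin 3 := .inl ⟨m - 1, by omega⟩
  rcases Nat.even_or_odd m with heven | hodd
  · have hu : u ≠ .inl (Fin.last m) := by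
      simp only [u, ne_eq, Sum.inl.injEq, Fin.ext_iff, Fin.val_last]
      omega
    refine .of_antipendant hu ?_
    rintro (j | t) hj
    · have : (j : ℕ) ≠ m := by simpa [Fin.ext_iff] using hj
      simp only [adj_inl_last_inl, elemCond, heven, ↓reduceIte, ne_eq, u, Sum.inl.injEq,
        Fin.ext_iff]
      omega
    · simp [adj_inl_last_inr hm, heven, u]
  · refine .of_pendant (u := u) ?_
    rintro (j | t)
    · simp only [adj_inl_last_inl, elemCond, Nat.not_even_iff_odd.2 hodd, ↓reduceIte, u,
        Sum.inl.injEq, Fin.ext_iff]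
      omega
    · simp [adj_inl_last_inr hm, Nat.not_even_iff_odd.2 hodd, u]

/- With `n = 2`, the graph of `C1` is the path `r p v₂ v₁ q`, that of `C3` the path
`q p r v₁ v₂`, and that of `C2` the 5-cycle `q p r v₂ v₁` with the chord `q r`. -/
theorem totallyDecomposable_two : ∀ c, TotallyDecomposable (CGraph c 2)
  | 0 => .of_isPruningSeq (l := [.inr 2, .inr 0, .inl 1, .inl 0]) (by decide)
  | 1 => .of_isPruningSeq (l := [.inr 1, .inr 0, .inr 2, .inl 1]) (by decide)
  | 2 => .of_isPruningSeq (l := [.inr 1, .inr 0, .inr 2, .inl 1]) (by decide)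

theorem totallyDecomposable {n : ℕ} (hn : 2 ≤ n) :
    TotallyDecomposable (CGraph c n) := by
  induction n, hn using Nat.le_induction with
  | base => exact totallyDecomposable_two c
  | succ m hm ih =>
    exact .of_oneVertexExtension (oneVertexExtension_last c hm) (castSuccEmb c m)
      (range_castSuccEmb c m) ih

end CGraph

theorem C_classes_totally_decomposable_general {W : Type*} (G : SimpleGraph W)
    (c : Fin 3) (n : ℕ) (hn : 2 ≤ n) (hiso : Nonempty (G ≃g CGraph c n)) :
    ∃ x : W, Relation.ReflTransGen (OVEStep G) Set.univ {x} :=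
  (CGraph.totallyDecomposable c hn).of_iso hiso.some

/-- Every graph in the class `C1 ∪ C2 ∪ C3` can be reduced to a single vertex by
repeatedly deleting a one-vertex extension of the current graph. -/
theorem C_classes_totally_decomposable {W : Type*} [Fintype W] (G : SimpleGraph W)
    (c : Fin 3) (n : ℕ) (hn : 2 ≤ n) (hiso : Nonempty (G ≃g CGraph c n)) :
    ∃ x : W, Relation.ReflTransGen (OVEStep G) Set.univ {x} :=
  C_classes_totally_decomposable_general G c n hn hiso
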